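/- arXiv:math/0511732 — 4 statements merged into one kernel-verified Lean document; each statement's English description precedes it below -/
import Mathlib

section
/- Let F_n be the free group on generators g₁, …, gₙ and λ its left regular representation on ℓ²(F_n). Then for all complex coefficients α₁, …, αₙ, the operator norm satisfies ‖Σ_{k=1}^n α_k λ(g_k)‖ ≤ 2 (Σ_{k=1}^n |α_k|²)^{1/2}. -/
lemma of_mul_toWord {α : Type*} [DecidableEq α] (k : α) (w : FreeGroup α)
    (hw : w.toWord.head? ≠ some (k, false)) :
    (FreeGroup.of k * w).toWord = (k, true) :: w.toWord := by
  conv_lhs => rw [← FreeGroup.mk_toWord (x := w)]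
  rw [show (FreeGroup.of k : FreeGroup α) = FreeGroup.mk [(k, true)] from rfl,
    FreeGroup.mul_mk, FreeGroup.toWord_mk]
  have : FreeGroup.reduce ((k, true) :: w.toWord) = (k, true) :: FreeGroup.reduce w.toWord := by
    rw [FreeGroup.reduce.cons, FreeGroup.reduce_toWord]
    cases hww : w.toWord with
    | nil => rfl
    | cons hd tl =>
      simp only []
      rw [if_neg]
      rintro ⟨h1, h2⟩
      apply hw
      rw [hww]
      cases hd with
      | mk a b =>
        simp at h1 h2
        subst h1
        cases b
        · rfl
        · simp at h2
  simpa [FreeGroup.reduce_toWord] using this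

lemma head_of_not_head {α : Type*} [DecidableEq α] (k : α) (w : FreeGroup α)
    (h : (FreeGroup.of k * w).toWord.head? ≠ some (k, true)) :
    w.toWord.head? = some (k, false) := by
  by_contra hc
  exact h (by rw [of_mul_toWord k w hc]; rfl)

lemma sum_ite_head_le {n : ℕ} (w : FreeGroup (Fin n)) (b : Bool) (c : ℝ) (hc : 0 ≤ c) :
    (∑ k : Fin n, if w.toWord.head? = some (k, b) then c else 0) ≤ c := by
  cases hw : w.toWord.head? with
  | none => simp [hc]
  | some p =>
    obtain ⟨a, b'⟩ := p
    by_cases hb : b' = b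
    · subst hb
      simp only [Option.some_inj, Prod.mk.injEq, and_true]
      rw [Finset.sum_ite_eq]
      simp
    · have h2 : ∀ k : Fin n, ¬ ((⟨a, b'⟩ : Fin n × Bool) = (k, b)) := by
        intro k h; exact hb (Prod.ext_iff.mp h).2
      simp only [Option.some_inj]
      simp [h2, hc]

lemma lp_norm_sq {ι : Type*} (f : lp (fun _ : ι => ℂ) 2) : ‖f‖ ^ 2 = ∑' i, ‖f i‖ ^ 2 := by
  have h := lp.norm_rpow_eq_tsum (p := 2) (by norm_num) f
  rw [show ((2 : ENNReal)).toReal = ((2 : ℕ) : ℝ) by norm_num] at h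
  simpa [Real.rpow_natCast] using h

lemma lp_summable_sq {ι : Type*} (f : lp (fun _ : ι => ℂ) 2) :
    Summable fun i => ‖f i‖ ^ 2 := by
  have h := (memℓp_gen_iff (p := 2) (by norm_num)).mp (lp.memℓp f)
  rw [show ((2 : ENNReal)).toReal = ((2 : ℕ) : ℝ) by norm_num] at h
  simpa [Real.rpow_natCast] using h

lemma memℓp_two_of_summable {ι : Type*} {f : ι → ℂ} (h : Summable fun i => ‖f i‖ ^ 2) :
    Memℓp f 2 := by
  apply memℓp_gen
  rw [show ((2 : ENNReal)).toReal = ((2 : ℕ) : ℝ) by norm_num]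
  simpa [Real.rpow_natCast] using h

/-- **Leinert's inequality.**
In the reduced C*-algebra of the free group `F_n`, for any complex coefficients
`α₁, …, αₙ`, the operator `Σ_k α_k λ(g_k)` on `ℓ²(F_n)` (hypothesized as a bounded
operator `T` acting by `(Tξ)(h) = Σ_k α_k ξ(g_k⁻¹ h)`) satisfies
`‖Σ_k α_k λ(g_k)‖ ≤ 2 (Σ_k |α_k|²)^{1/2}`. -/
theorem leinert_inequality (n : ℕ) (α : Fin n → ℂ)
    (T : lp (fun _ : FreeGroup (Fin n) => ℂ) 2 →L[ℂ] lp (fun _ : FreeGroup (Fin n) => ℂ) 2)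
    (hT : ∀ (ξ : lp (fun _ : FreeGroup (Fin n) => ℂ) 2) (h : FreeGroup (Fin n)),
      (T ξ : ∀ _ : FreeGroup (Fin n), ℂ) h =
        ∑ k, α k * (ξ : ∀ _ : FreeGroup (Fin n), ℂ) ((FreeGroup.of k)⁻¹ * h)) :
    ‖T‖ ≤ 2 * Real.sqrt (∑ k, ‖α k‖ ^ 2) := by
  classical
  have hS0 : (0:ℝ) ≤ ∑ k, ‖α k‖ ^ 2 := Finset.sum_nonneg fun k _ => sq_nonneg _
  set S : ℝ := ∑ k, ‖α k‖ ^ 2 with hSdef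
  refine T.opNorm_le_bound (by positivity) fun ξ => ?_
  -- basic summability facts
  have base : ∀ k : Fin n, Summable fun h : FreeGroup (Fin n) =>
      ‖ξ ((FreeGroup.of k)⁻¹ * h)‖ ^ 2 := fun k =>
    (lp_summable_sq ξ).comp_injective (mul_right_injective _)
  have basesum : ∀ k : Fin n,
      (∑' h : FreeGroup (Fin n), ‖ξ ((FreeGroup.of k)⁻¹ * h)‖ ^ 2) = ‖ξ‖ ^ 2 := by
    intro k
    rw [lp_norm_sq ξ]
    exact (Equiv.mulLeft ((FreeGroup.of k)⁻¹)).tsum_eq fun w => ‖ξ w‖ ^ 2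
  -- the two pieces
  set fa : FreeGroup (Fin n) → ℂ := fun h => ∑ k,
    if h.toWord.head? = some (k, true) then α k * ξ ((FreeGroup.of k)⁻¹ * h) else 0 with hfa
  set fb : FreeGroup (Fin n) → ℂ := fun h => ∑ k,
    if h.toWord.head? = some (k, true) then 0 else α k * ξ ((FreeGroup.of k)⁻¹ * h) with hfb
  -- pointwise bounds
  have bnda : ∀ h : FreeGroup (Fin n), ‖fa h‖ ^ 2 ≤ ∑ k,
      (if h.toWord.head? = some (k, true)
        then ‖α k‖ ^ 2 * ‖ξ ((FreeGroup.of k)⁻¹ * h)‖ ^ 2 else 0) := by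
    intro h
    have h1 : ‖fa h‖ ≤ ∑ k, ((if h.toWord.head? = some (k, true)
        then ‖α k‖ * ‖ξ ((FreeGroup.of k)⁻¹ * h)‖ else 0) *
        (if h.toWord.head? = some (k, true) then (1:ℝ) else 0)) := by
      refine (norm_sum_le _ _).trans (Finset.sum_le_sum fun k _ => ?_)
      split
      · rw [norm_mul, mul_one]
      · simp
    calc ‖fa h‖ ^ 2 ≤ (∑ k, ((if h.toWord.head? = some (k, true)
          then ‖α k‖ * ‖ξ ((FreeGroup.of k)⁻¹ * h)‖ else 0) *
          (if h.toWord.head? = some (k, true) then (1:ℝ) else 0))) ^ 2 := by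
          apply pow_le_pow_left₀ (norm_nonneg _) h1
      _ ≤ (∑ k, (if h.toWord.head? = some (k, true)
          then ‖α k‖ * ‖ξ ((FreeGroup.of k)⁻¹ * h)‖ else 0) ^ 2) *
          (∑ k, (if h.toWord.head? = some (k, true) then (1:ℝ) else 0) ^ 2) :=
          Finset.sum_mul_sq_le_sq_mul_sq _ _ _
      _ ≤ (∑ k, (if h.toWord.head? = some (k, true)
          then ‖α k‖ * ‖ξ ((FreeGroup.of k)⁻¹ * h)‖ else 0) ^ 2) * 1 := by
          apply mul_le_mul_of_nonneg_left _ (Finset.sum_nonneg fun k _ => sq_nonneg _)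
          have : ∀ k : Fin n, (if h.toWord.head? = some (k, true) then (1:ℝ) else 0) ^ 2 =
              (if h.toWord.head? = some (k, true) then (1:ℝ) else 0) := by
            intro k; split <;> norm_num
          simp only [this]
          exact sum_ite_head_le h true 1 zero_le_one
      _ = ∑ k, (if h.toWord.head? = some (k, true)
          then ‖α k‖ ^ 2 * ‖ξ ((FreeGroup.of k)⁻¹ * h)‖ ^ 2 else 0) := by
          rw [mul_one]
          refine Finset.sum_congr rfl fun k _ => ?_
          split <;> [ring; norm_num]
  have bndb : ∀ h : FreeGroup (Fin n), ‖fb h‖ ^ 2 ≤ S * ∑ k,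
      (if h.toWord.head? = some (k, true) then 0
        else ‖ξ ((FreeGroup.of k)⁻¹ * h)‖ ^ 2) := by
    intro h
    have h1 : ‖fb h‖ ≤ ∑ k, ‖α k‖ * (if h.toWord.head? = some (k, true)
        then 0 else ‖ξ ((FreeGroup.of k)⁻¹ * h)‖) := by
      refine (norm_sum_le _ _).trans (Finset.sum_le_sum fun k _ => ?_)
      split
      · simp
      · rw [norm_mul]
    calc ‖fb h‖ ^ 2 ≤ (∑ k, ‖α k‖ * (if h.toWord.head? = some (k, true)
          then 0 else ‖ξ ((FreeGroup.of k)⁻¹ * h)‖)) ^ 2 := by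
          apply pow_le_pow_left₀ (norm_nonneg _) h1
      _ ≤ (∑ k, ‖α k‖ ^ 2) * (∑ k, (if h.toWord.head? = some (k, true)
          then 0 else ‖ξ ((FreeGroup.of k)⁻¹ * h)‖) ^ 2) :=
          Finset.sum_mul_sq_le_sq_mul_sq _ _ _
      _ = S * ∑ k, (if h.toWord.head? = some (k, true) then 0
          else ‖ξ ((FreeGroup.of k)⁻¹ * h)‖ ^ 2) := by
          rw [← hSdef]
          congr 1
          refine Finset.sum_congr rfl fun k _ => ?_
          split <;> norm_num
  -- summability of the bounds
  have suma1 : ∀ k : Fin n, Summable fun h : FreeGroup (Fin n) =>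
      (if h.toWord.head? = some (k, true)
        then ‖α k‖ ^ 2 * ‖ξ ((FreeGroup.of k)⁻¹ * h)‖ ^ 2 else 0) := by
    intro k
    refine Summable.of_nonneg_of_le (fun h => by positivity) (fun h => ?_)
      ((base k).mul_left (‖α k‖ ^ 2))
    split
    · exact le_rfl
    · positivity
  have sumb1 : ∀ k : Fin n, Summable fun h : FreeGroup (Fin n) =>
      (if h.toWord.head? = some (k, true) then 0
        else ‖ξ ((FreeGroup.of k)⁻¹ * h)‖ ^ 2) := by
    intro k
    refine Summable.of_nonneg_of_le (fun h => by positivity) (fun h => ?_) (base k)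
    split
    · positivity
    · exact le_rfl
  have sum_bnda : Summable fun h : FreeGroup (Fin n) => ∑ k,
      (if h.toWord.head? = some (k, true)
        then ‖α k‖ ^ 2 * ‖ξ ((FreeGroup.of k)⁻¹ * h)‖ ^ 2 else 0) :=
    summable_sum fun k _ => suma1 k
  have sum_bndb0 : Summable fun h : FreeGroup (Fin n) => ∑ k,
      (if h.toWord.head? = some (k, true) then 0
        else ‖ξ ((FreeGroup.of k)⁻¹ * h)‖ ^ 2) :=
    summable_sum fun k _ => sumb1 k
  have sumfa : Summable fun h => ‖fa h‖ ^ 2 :=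
    Summable.of_nonneg_of_le (fun h => sq_nonneg _) bnda sum_bnda
  have sumfb : Summable fun h => ‖fb h‖ ^ 2 :=
    Summable.of_nonneg_of_le (fun h => sq_nonneg _) bndb (sum_bndb0.mul_left S)
  set a : lp (fun _ : FreeGroup (Fin n) => ℂ) 2 := ⟨fa, memℓp_two_of_summable sumfa⟩ with ha
  set b : lp (fun _ : FreeGroup (Fin n) => ℂ) 2 := ⟨fb, memℓp_two_of_summable sumfb⟩ with hb
  have hcoea : ∀ h, a h = fa h := fun h => rfl
  have hcoeb : ∀ h, b h = fb h := fun h => rfl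
  have hTξ : T ξ = a + b := by
    apply lp.ext
    funext h
    rw [lp.coeFn_add]
    simp only [Pi.add_apply]
    rw [hT ξ h]
    show (∑ k, α k * ξ ((FreeGroup.of k)⁻¹ * h)) = fa h + fb h
    simp only [hfa, hfb]
    rw [← Finset.sum_add_distrib]
    refine Finset.sum_congr rfl fun k _ => ?_
    split <;> simp
  -- norm bound for a
  have na : ‖a‖ ≤ Real.sqrt S * ‖ξ‖ := by
    have hsq : ‖a‖ ^ 2 ≤ S * ‖ξ‖ ^ 2 := by
      rw [lp_norm_sq a]
      have step1 : (∑' h, ‖a h‖ ^ 2) ≤ ∑' h, ∑ k,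
          (if h.toWord.head? = some (k, true)
            then ‖α k‖ ^ 2 * ‖ξ ((FreeGroup.of k)⁻¹ * h)‖ ^ 2 else 0) :=
        Summable.tsum_le_tsum (fun h => by rw [hcoea]; exact bnda h)
          (by simpa only [hcoea] using sumfa) sum_bnda
      refine step1.trans ?_
      rw [Summable.tsum_finsetSum fun k _ => suma1 k]
      have perk : ∀ k : Fin n, (∑' h, (if h.toWord.head? = some (k, true)
          then ‖α k‖ ^ 2 * ‖ξ ((FreeGroup.of k)⁻¹ * h)‖ ^ 2 else 0)) ≤
          ‖α k‖ ^ 2 * ‖ξ‖ ^ 2 := by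
        intro k
        calc (∑' h, (if h.toWord.head? = some (k, true)
              then ‖α k‖ ^ 2 * ‖ξ ((FreeGroup.of k)⁻¹ * h)‖ ^ 2 else 0)) ≤
            ∑' h, ‖α k‖ ^ 2 * ‖ξ ((FreeGroup.of k)⁻¹ * h)‖ ^ 2 := by
              refine Summable.tsum_le_tsum (fun h => ?_) (suma1 k) ((base k).mul_left _)
              split
              · exact le_rfl
              · positivity
          _ = ‖α k‖ ^ 2 * ∑' h, ‖ξ ((FreeGroup.of k)⁻¹ * h)‖ ^ 2 := tsum_mul_left
          _ = ‖α k‖ ^ 2 * ‖ξ‖ ^ 2 := by rw [basesum k]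
      calc (∑ k, ∑' h, (if h.toWord.head? = some (k, true)
            then ‖α k‖ ^ 2 * ‖ξ ((FreeGroup.of k)⁻¹ * h)‖ ^ 2 else 0)) ≤
          ∑ k, ‖α k‖ ^ 2 * ‖ξ‖ ^ 2 := Finset.sum_le_sum fun k _ => perk k
        _ = S * ‖ξ‖ ^ 2 := by rw [← Finset.sum_mul]
    have h' := Real.sqrt_le_sqrt hsq
    rwa [Real.sqrt_sq (norm_nonneg a), Real.sqrt_mul hS0, Real.sqrt_sq (norm_nonneg ξ)] at h'
  -- norm bound for b
  have nb : ‖b‖ ≤ Real.sqrt S * ‖ξ‖ := by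
    have hsq : ‖b‖ ^ 2 ≤ S * ‖ξ‖ ^ 2 := by
      rw [lp_norm_sq b]
      have step1 : (∑' h, ‖b h‖ ^ 2) ≤ ∑' h, S * ∑ k,
          (if h.toWord.head? = some (k, true) then 0
            else ‖ξ ((FreeGroup.of k)⁻¹ * h)‖ ^ 2) :=
        Summable.tsum_le_tsum (fun h => by rw [hcoeb]; exact bndb h)
          (by simpa only [hcoeb] using sumfb) (sum_bndb0.mul_left S)
      refine step1.trans ?_
      rw [tsum_mul_left]
      refine mul_le_mul_of_nonneg_left ?_ hS0
      rw [Summable.tsum_finsetSum fun k _ => sumb1 k]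
      -- reindex each inner tsum
      have perk : ∀ k : Fin n, (∑' h, (if h.toWord.head? = some (k, true) then 0
          else ‖ξ ((FreeGroup.of k)⁻¹ * h)‖ ^ 2)) =
          ∑' w : FreeGroup (Fin n), (if (FreeGroup.of k * w).toWord.head? = some (k, true)
            then 0 else ‖ξ w‖ ^ 2) := by
        intro k
        rw [← (Equiv.mulLeft (FreeGroup.of k)).tsum_eq]
        refine tsum_congr fun w => ?_
        have he : (Equiv.mulLeft (FreeGroup.of k)) w = FreeGroup.of k * w := rfl
        rw [he, inv_mul_cancel_left]
      have perk2 : ∀ (k : Fin n) (w : FreeGroup (Fin n)),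
          (if (FreeGroup.of k * w).toWord.head? = some (k, true) then 0 else ‖ξ w‖ ^ 2) ≤
          (if w.toWord.head? = some (k, false) then ‖ξ w‖ ^ 2 else 0) := by
        intro k w
        by_cases hc : (FreeGroup.of k * w).toWord.head? = some (k, true)
        · rw [if_pos hc]
          split
          · positivity
          · exact le_rfl
        · rw [if_neg hc, if_pos (head_of_not_head k w hc)]
      have sumw : Summable fun w : FreeGroup (Fin n) => ‖ξ w‖ ^ 2 := lp_summable_sq ξ
      have sumw1 : ∀ k : Fin n, Summable fun w : FreeGroup (Fin n) =>
          (if w.toWord.head? = some (k, false) then ‖ξ w‖ ^ 2 else 0) := by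
        intro k
        refine Summable.of_nonneg_of_le (fun w => by positivity) (fun w => ?_) sumw
        split
        · exact le_rfl
        · positivity
      calc (∑ k, ∑' h, (if h.toWord.head? = some (k, true) then 0
            else ‖ξ ((FreeGroup.of k)⁻¹ * h)‖ ^ 2)) =
          ∑ k, ∑' w : FreeGroup (Fin n), (if (FreeGroup.of k * w).toWord.head? = some (k, true)
            then 0 else ‖ξ w‖ ^ 2) := Finset.sum_congr rfl fun k _ => perk k
        _ ≤ ∑ k, ∑' w : FreeGroup (Fin n),
            (if w.toWord.head? = some (k, false) then ‖ξ w‖ ^ 2 else 0) := by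
            refine Finset.sum_le_sum fun k _ => ?_
            refine Summable.tsum_le_tsum (perk2 k) ?_ (sumw1 k)
            refine Summable.of_nonneg_of_le (fun w => ?_) (fun w => (perk2 k w).trans ?_) sumw
            · split
              · exact le_rfl
              · positivity
            · split
              · exact le_rfl
              · positivity
        _ = ∑' w : FreeGroup (Fin n), ∑ k,
            (if w.toWord.head? = some (k, false) then ‖ξ w‖ ^ 2 else 0) :=
            (Summable.tsum_finsetSum fun k _ => sumw1 k).symm
        _ ≤ ∑' w : FreeGroup (Fin n), ‖ξ w‖ ^ 2 := by
            refine Summable.tsum_le_tsum (fun w => sum_ite_head_le w false _ (by positivity)) ?_ sumw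
            refine Summable.of_nonneg_of_le
              (fun w => Finset.sum_nonneg fun k _ => by positivity)
              (fun w => sum_ite_head_le w false _ (by positivity)) sumw
        _ = ‖ξ‖ ^ 2 := (lp_norm_sq ξ).symm
    have h' := Real.sqrt_le_sqrt hsq
    rwa [Real.sqrt_sq (norm_nonneg b), Real.sqrt_mul hS0, Real.sqrt_sq (norm_nonneg ξ)] at h'
  calc ‖T ξ‖ = ‖a + b‖ := by rw [hTξ]
    _ ≤ ‖a‖ + ‖b‖ := norm_add_le _ _
    _ ≤ Real.sqrt S * ‖ξ‖ + Real.sqrt S * ‖ξ‖ := add_le_add na nb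
    _ = 2 * Real.sqrt S * ‖ξ‖ := by ring
end

section
/- Let F_n be the free group on n generators, λ its left regular representation on ℓ²(F_n), and W_d the set of reduced words of length exactly d. Then for every finitely supported family of complex coefficients (α_w)_{w ∈ W_d} one has ‖Σ_{w ∈ W_d} α_w λ(w)‖_{B(ℓ²(F_n))} ≤ (d+1) (Σ_{w ∈ W_d} |α_w|²)^{1/2}. -/
open FreeGroup List
open scoped ENNReal

namespace Haagerup

variable {α : Type*} [DecidableEq α]

/-- A word is reduced iff no two adjacent letters cancel. -/
def IsRed (L : List (α × Bool)) : Prop :=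
  List.Chain' (fun a b => ¬(b.1 = a.1 ∧ b.2 = !a.2)) L

lemma isRed_reduce_eq {L : List (α × Bool)} (h : IsRed L) : FreeGroup.reduce L = L := by
  induction L with
  | nil => rfl
  | cons a L ih =>
    have hL : IsRed L := h.tail
    rw [FreeGroup.reduce.cons, ih hL]
    cases L with
    | nil => rfl
    | cons b t =>
      have hab : ¬(b.1 = a.1 ∧ b.2 = !a.2) := (List.isChain_cons_cons.1 h).1
      simp only []
      rw [if_neg]
      intro ⟨h1, h2⟩
      exact hab ⟨h1.symm, by cases a; cases b; simp_all⟩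

lemma isRed_of_not_exists {L : List (α × Bool)} (h : ¬ IsRed L) :
    ∃ (L₁ L₂ : List (α × Bool)) (x : α) (b : Bool),
      L = L₁ ++ (x, b) :: (x, !b) :: L₂ := by
  induction L with
  | nil => exact absurd List.isChain_nil h
  | cons a L ih =>
    by_cases hL : IsRed L
    · cases L with
      | nil => exact absurd (List.isChain_singleton _) h
      | cons c t =>
        have : ¬ ¬(c.1 = a.1 ∧ c.2 = !a.2) := fun hc => h (List.isChain_cons_cons.2 ⟨hc, hL⟩)
        push_neg at this
        refine ⟨[], t, a.1, a.2, ?_⟩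
        simp only [List.nil_append]
        have : c = (a.1, !a.2) := by
          cases c; cases a; simp_all
        rw [this]
    · obtain ⟨L₁, L₂, x, b, hx⟩ := ih hL
      exact ⟨a :: L₁, L₂, x, b, by rw [hx, List.cons_append]⟩

lemma reduce_eq_isRed {L : List (α × Bool)} (h : FreeGroup.reduce L = L) : IsRed L := by
  by_contra hn
  obtain ⟨L₁, L₂, x, b, rfl⟩ := isRed_of_not_exists hn
  have hstep : FreeGroup.Red.Step (L₁ ++ (x, b) :: (x, !b) :: L₂) (L₁ ++ L₂) :=
    FreeGroup.Red.Step.not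
  have h5 := FreeGroup.reduce.Step.eq hstep
  rw [h] at h5
  have hlen := congrArg List.length h5
  have h6 : (FreeGroup.reduce (L₁ ++ L₂)).length ≤ (L₁ ++ L₂).length :=
    FreeGroup.Red.length_le (FreeGroup.reduce.red (L := L₁ ++ L₂))
  simp only [List.length_append, List.length_cons] at hlen h6
  omega

lemma isRed_toWord (x : FreeGroup α) : IsRed (toWord x) :=
  reduce_eq_isRed (FreeGroup.reduce_toWord x)

/-- The junction lemma: the reduction of a concatenation of two reduced words is
obtained by cancelling a middle part. -/
lemma junction : ∀ (N : ℕ) (L₁ L₂ : List (α × Bool)), L₁.length ≤ N →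
    IsRed L₁ → IsRed L₂ →
    ∃ P M S, L₁ = P ++ M ∧ L₂ = FreeGroup.invRev M ++ S ∧
      FreeGroup.reduce (L₁ ++ L₂) = P ++ S := by
  intro N
  induction N with
  | zero =>
    intro L₁ L₂ hlen h₁ h₂
    have : L₁ = [] := List.length_eq_zero_iff.1 (Nat.le_zero.1 hlen)
    subst this
    exact ⟨[], [], L₂, rfl, by simp [FreeGroup.invRev], by simpa using isRed_reduce_eq h₂⟩
  | succ N ih =>
    intro L₁ L₂ hlen h₁ h₂
    by_cases hred : IsRed (L₁ ++ L₂)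
    · exact ⟨L₁, [], L₂, by simp, by simp [FreeGroup.invRev], by simpa using isRed_reduce_eq hred⟩
    · -- failure must be at the junction
      have hj : ¬ ∀ x ∈ L₁.getLast?, ∀ y ∈ L₂.head?, ¬(y.1 = x.1 ∧ y.2 = !x.2) :=
        fun hj => hred (List.isChain_append.2 ⟨h₁, h₂, hj⟩)
      push_neg at hj
      obtain ⟨a, ha, y, hy, h1, h2⟩ := hj
      -- L₁ ends with a, L₂ starts with y = (a.1, !a.2)
      have hL₁ : L₁ = L₁.dropLast ++ [a] := by
        rw [List.dropLast_append_getLast? a ha]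
      have hL₂ : L₂ = y :: L₂.tail := by
        cases L₂ with
        | nil => simp at hy
        | cons c t =>
          have : c = y := by simpa [eq_comm] using hy
          rw [this]
          rfl
      have hy' : y = (a.1, !a.2) := by rw [← h1, ← h2]
      have hred1 : IsRed L₁.dropLast := h₁.prefix (List.dropLast_prefix _)
      have hred2 : IsRed L₂.tail := h₂.suffix (List.tail_suffix _)
      have hlen' : L₁.dropLast.length ≤ N := by
        rw [List.length_dropLast]; omega
      obtain ⟨P, M, S, e1, e2, e3⟩ := ih L₁.dropLast L₂.tail hlen' hred1 hred2
      refine ⟨P, M ++ [a], S, ?_, ?_, ?_⟩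
      · rw [hL₁, e1, List.append_assoc]
      · rw [hL₂, hy', e2]
        simp [FreeGroup.invRev]
      · have hstep : FreeGroup.Red.Step (L₁.dropLast ++ (a.1, a.2) :: (a.1, !a.2) :: L₂.tail)
            (L₁.dropLast ++ L₂.tail) := FreeGroup.Red.Step.not
        have heq : L₁ ++ L₂ = L₁.dropLast ++ (a.1, a.2) :: (a.1, !a.2) :: L₂.tail := by
          conv_lhs => rw [hL₁, hL₂, hy']
          simp
        rw [heq, FreeGroup.reduce.Step.eq hstep, e3]


lemma key_split (w g : FreeGroup α) :
    ∃ k, k ≤ norm w ∧ k ≤ norm g ∧ norm (w * g) + 2 * k = norm w + norm g ∧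
      (toWord (w * g)).take (norm w - k) = (toWord w).take (norm w - k) ∧
      (toWord (w * g)).drop (norm w - k) = (toWord g).drop k := by
  obtain ⟨P, M, S, e1, e2, e3⟩ := junction (toWord w).length (toWord w) (toWord g) le_rfl
    (isRed_toWord w) (isRed_toWord g)
  have hmul : toWord (w * g) = P ++ S := by
    conv_lhs => rw [← mk_toWord (x := w), ← mk_toWord (x := g)]
    rw [FreeGroup.mul_mk, FreeGroup.toWord_mk, e3]
  have hnw : norm w = P.length + M.length := by rw [FreeGroup.norm, e1, List.length_append]
  have hng : norm g = M.length + S.length := by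
    rw [FreeGroup.norm, e2, List.length_append, FreeGroup.invRev_length]
  have hnm : norm (w * g) = P.length + S.length := by
    rw [FreeGroup.norm, hmul, List.length_append]
  have hk : norm w - M.length = P.length := by omega
  refine ⟨M.length, by omega, by omega, by omega, ?_, ?_⟩
  · rw [hk, hmul, e1, List.take_left, List.take_left]
  · rw [hk, hmul, e2, List.drop_left,
      show M.length = (FreeGroup.invRev M).length by rw [FreeGroup.invRev_length],
      List.drop_left]


/-- Prefix of length `m` of the reduced word of `x`, as a group element. -/
def pre (m : ℕ) (x : FreeGroup α) : FreeGroup α := FreeGroup.mk ((toWord x).take m)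

/-- Suffix from position `m` of the reduced word of `x`, as a group element. -/
def suf (m : ℕ) (x : FreeGroup α) : FreeGroup α := FreeGroup.mk ((toWord x).drop m)

lemma pre_mul_suf (m : ℕ) (x : FreeGroup α) : pre m x * suf m x = x := by
  rw [pre, suf, FreeGroup.mul_mk, List.take_append_drop, FreeGroup.mk_toWord]

/-- The number of letters cancelled when multiplying `w` by `w⁻¹ * x`. -/
def kfun (d : ℕ) (w x : FreeGroup α) : ℕ := (d + norm (w⁻¹ * x) - norm x) / 2

lemma kfun_spec {d : ℕ} (w x : FreeGroup α) (hd : norm w = d) :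
    kfun d w x ≤ d ∧ kfun d w x ≤ norm (w⁻¹ * x) ∧
      d + norm (w⁻¹ * x) = norm x + 2 * kfun d w x ∧
      pre (d - kfun d w x) x = pre (d - kfun d w x) w ∧
      suf (d - kfun d w x) x = suf (kfun d w x) (w⁻¹ * x) := by
  obtain ⟨k, hk1, hk2, hk3, hk4, hk5⟩ := key_split w (w⁻¹ * x)
  rw [mul_inv_cancel_left] at hk3 hk4 hk5
  rw [hd] at hk1 hk3 hk4 hk5
  have hkf : kfun d w x = k := by rw [kfun]; omega
  rw [hkf]
  exact ⟨hk1, hk2, by omega, congrArg FreeGroup.mk hk4, congrArg FreeGroup.mk hk5⟩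

variable {c : FreeGroup α →₀ ℂ} {d : ℕ}

/-- The estimate for a single stratum of cancellation length `k`. -/
lemma per_k (hsupp : ∀ w ∈ c.support, norm w = d) (k : ℕ)
    (ξ : FreeGroup α → ℂ) (N : ℝ)
    (hξ : ∀ s : Finset (FreeGroup α), ∑ h ∈ s, ‖ξ h‖ ^ 2 ≤ N ^ 2)
    (X : Finset (FreeGroup α)) :
    ∑ x ∈ X, ‖∑ w ∈ c.support.filter (fun w => kfun d w x = k), c w * ξ (w⁻¹ * x)‖ ^ 2
      ≤ (∑ w ∈ c.support, ‖c w‖ ^ 2) * N ^ 2 := by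
  classical
  set A := c.support with hA
  set Ak : FreeGroup α → Finset (FreeGroup α) :=
    fun x => A.filter (fun w => kfun d w x = k) with hAk
  -- facts for members of Ak x
  have hmem : ∀ x, ∀ w ∈ Ak x, w ∈ A ∧ norm w = d ∧ kfun d w x = k ∧
      pre (d - k) x = pre (d - k) w ∧ suf (d - k) x = suf k (w⁻¹ * x) := by
    intro x w hw
    rw [hAk, Finset.mem_filter] at hw
    obtain ⟨hwA, hwk⟩ := hw
    have hd := hsupp w hwA
    obtain ⟨_, _, _, h4, h5⟩ := kfun_spec w x hd
    rw [hwk] at h4 h5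
    exact ⟨hwA, hd, hwk, h4, h5⟩
  set F : FreeGroup α → ℝ := fun x => ∑ w ∈ Ak x, ‖c w‖ ^ 2 with hF
  set G : FreeGroup α → ℝ := fun x => ∑ w ∈ Ak x, ‖ξ (w⁻¹ * x)‖ ^ 2 with hG
  have hGnn : ∀ x, 0 ≤ G x := fun x => Finset.sum_nonneg fun w _ => sq_nonneg _
  have step1 : ∀ x, ‖∑ w ∈ Ak x, c w * ξ (w⁻¹ * x)‖ ^ 2 ≤ F x * G x := by
    intro x
    calc ‖∑ w ∈ Ak x, c w * ξ (w⁻¹ * x)‖ ^ 2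
        ≤ (∑ w ∈ Ak x, ‖c w‖ * ‖ξ (w⁻¹ * x)‖) ^ 2 := by
          apply pow_le_pow_left₀ (norm_nonneg _)
          refine (norm_sum_le _ _).trans (le_of_eq ?_)
          exact Finset.sum_congr rfl fun w _ => norm_mul _ _
      _ ≤ F x * G x := Finset.sum_mul_sq_le_sq_mul_sq _ _ _
  set u : FreeGroup α → FreeGroup α := pre (d - k) with hu
  set F' : FreeGroup α → ℝ :=
    fun p => ∑ w ∈ A.filter (fun w => pre (d - k) w = p), ‖c w‖ ^ 2 with hF'
  have hF'nn : ∀ p, 0 ≤ F' p := fun p => Finset.sum_nonneg fun w _ => sq_nonneg _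
  have hFF' : ∀ x, F x ≤ F' (u x) := by
    intro x
    apply Finset.sum_le_sum_of_subset_of_nonneg
    · intro w hw
      obtain ⟨hwA, _, _, h4, _⟩ := hmem x w hw
      exact Finset.mem_filter.2 ⟨hwA, h4.symm⟩
    · exact fun w _ _ => sq_nonneg _
  -- reconstruction: for w ∈ Ak x, x = u x * suf k (w⁻¹ x)
  have hrec : ∀ x, ∀ w ∈ Ak x, x = u x * suf k (w⁻¹ * x) := by
    intro x w hw
    obtain ⟨_, _, _, _, h5⟩ := hmem x w hw
    conv_lhs => rw [← pre_mul_suf (d - k) x]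
    rw [hu, h5]
  calc ∑ x ∈ X, ‖∑ w ∈ Ak x, c w * ξ (w⁻¹ * x)‖ ^ 2
      ≤ ∑ x ∈ X, F' (u x) * G x := by
        refine Finset.sum_le_sum fun x _ => (step1 x).trans ?_
        exact mul_le_mul_of_nonneg_right (hFF' x) (hGnn x)
    _ = ∑ p ∈ X.image u, ∑ x ∈ X.filter (fun x => u x = p), F' (u x) * G x :=
        (Finset.sum_fiberwise_of_maps_to (fun x hx => Finset.mem_image_of_mem u hx) _).symm
    _ ≤ ∑ p ∈ X.image u, F' p * N ^ 2 := by
        refine Finset.sum_le_sum fun p _ => ?_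
        have : ∑ x ∈ X.filter (fun x => u x = p), F' (u x) * G x
            = F' p * ∑ x ∈ X.filter (fun x => u x = p), G x := by
          rw [Finset.mul_sum]
          refine Finset.sum_congr rfl fun x hx => ?_
          rw [(Finset.mem_filter.1 hx).2]
        rw [this]
        refine mul_le_mul_of_nonneg_left ?_ (hF'nn p)
        -- the G-sums over the fiber are sums of ‖ξ‖² over pairwise disjoint sets
        have hGim : ∀ x, G x = ∑ g ∈ (Ak x).image (fun w => w⁻¹ * x), ‖ξ g‖ ^ 2 := by
          intro x
          rw [Finset.sum_image]
          intro w _ w' _ h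
          exact inv_injective (mul_right_cancel h)
        have hdisj : Set.PairwiseDisjoint (↑(X.filter (fun x => u x = p)))
            (fun x => (Ak x).image (fun w => w⁻¹ * x)) := by
          intro x hx x' hx' hne
          simp only [Finset.coe_filter, Set.mem_setOf_eq] at hx hx'
          refine Finset.disjoint_left.2 fun g hg hg' => hne ?_
          obtain ⟨w, hw, rfl⟩ := Finset.mem_image.1 hg
          obtain ⟨w', hw', he⟩ := Finset.mem_image.1 hg'
          have e1 := hrec x w hw
          have e2 := hrec x' w' hw'
          rw [he] at e2
          rw [hx.2] at e1
          rw [hx'.2] at e2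
          rw [e1, e2]
        calc ∑ x ∈ X.filter (fun x => u x = p), G x
            = ∑ g ∈ (X.filter (fun x => u x = p)).biUnion
                (fun x => (Ak x).image (fun w => w⁻¹ * x)), ‖ξ g‖ ^ 2 := by
              rw [Finset.sum_biUnion hdisj]
              exact Finset.sum_congr rfl fun x _ => hGim x
          _ ≤ N ^ 2 := hξ _
    _ = (∑ p ∈ X.image u, F' p) * N ^ 2 := by rw [Finset.sum_mul]
    _ ≤ (∑ w ∈ A, ‖c w‖ ^ 2) * N ^ 2 := by
        refine mul_le_mul_of_nonneg_right ?_ (sq_nonneg N)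
        exact Finset.sum_fiberwise_le_sum_of_sum_fiber_nonneg
          (fun p _ => Finset.sum_nonneg fun w _ => sq_nonneg _)

/-- The main finite estimate. -/
lemma main_est (hsupp : ∀ w ∈ c.support, norm w = d)
    (ξ : FreeGroup α → ℂ) (N : ℝ)
    (hξ : ∀ s : Finset (FreeGroup α), ∑ h ∈ s, ‖ξ h‖ ^ 2 ≤ N ^ 2)
    (X : Finset (FreeGroup α)) :
    ∑ x ∈ X, ‖∑ w ∈ c.support, c w * ξ (w⁻¹ * x)‖ ^ 2
      ≤ ((d : ℝ) + 1) ^ 2 * (∑ w ∈ c.support, ‖c w‖ ^ 2) * N ^ 2 := by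
  classical
  have hsplit : ∀ x, ∑ w ∈ c.support, c w * ξ (w⁻¹ * x)
      = ∑ k ∈ Finset.range (d + 1),
          ∑ w ∈ c.support.filter (fun w => kfun d w x = k), c w * ξ (w⁻¹ * x) := by
    intro x
    refine (Finset.sum_fiberwise_of_maps_to (fun w hw => ?_) _).symm
    obtain ⟨h1, _, _, _, _⟩ := kfun_spec w x (hsupp w hw)
    exact Finset.mem_range.2 (Nat.lt_succ_of_le h1)
  calc ∑ x ∈ X, ‖∑ w ∈ c.support, c w * ξ (w⁻¹ * x)‖ ^ 2
      ≤ ∑ x ∈ X, ((d : ℝ) + 1) * ∑ k ∈ Finset.range (d + 1),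
          ‖∑ w ∈ c.support.filter (fun w => kfun d w x = k), c w * ξ (w⁻¹ * x)‖ ^ 2 := by
        refine Finset.sum_le_sum fun x _ => ?_
        rw [hsplit x]
        calc ‖∑ k ∈ Finset.range (d + 1),
              ∑ w ∈ c.support.filter (fun w => kfun d w x = k), c w * ξ (w⁻¹ * x)‖ ^ 2
            ≤ (∑ k ∈ Finset.range (d + 1),
              ‖∑ w ∈ c.support.filter (fun w => kfun d w x = k), c w * ξ (w⁻¹ * x)‖) ^ 2 := by
              exact pow_le_pow_left₀ (norm_nonneg _) (norm_sum_le _ _) 2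
          _ ≤ ((d : ℝ) + 1) * ∑ k ∈ Finset.range (d + 1),
              ‖∑ w ∈ c.support.filter (fun w => kfun d w x = k), c w * ξ (w⁻¹ * x)‖ ^ 2 := by
              have := sq_sum_le_card_mul_sum_sq
                (s := Finset.range (d + 1))
                (f := fun k => ‖∑ w ∈ c.support.filter (fun w => kfun d w x = k),
                  c w * ξ (w⁻¹ * x)‖)
              simpa using this
    _ = ((d : ℝ) + 1) * ∑ k ∈ Finset.range (d + 1), ∑ x ∈ X,
          ‖∑ w ∈ c.support.filter (fun w => kfun d w x = k), c w * ξ (w⁻¹ * x)‖ ^ 2 := by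
        rw [← Finset.mul_sum, Finset.sum_comm]
    _ ≤ ((d : ℝ) + 1) * ∑ k ∈ Finset.range (d + 1), (∑ w ∈ c.support, ‖c w‖ ^ 2) * N ^ 2 := by
        refine mul_le_mul_of_nonneg_left ?_ (by positivity)
        exact Finset.sum_le_sum fun k _ => per_k hsupp k ξ N hξ X
    _ = ((d : ℝ) + 1) ^ 2 * (∑ w ∈ c.support, ‖c w‖ ^ 2) * N ^ 2 := by
        rw [Finset.sum_const, Finset.card_range]
        push_cast
        ring

end Haagerup

/-- **Haagerup's inequality.**
Let `F_n` be the free group on `n` generators and let `α` be a finitely supported family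
of complex coefficients supported on the set `W_d` of reduced words of length exactly `d`.
Then the operator `Σ_{w ∈ W_d} α_w λ(w)` on `ℓ²(F_n)` (hypothesized as a bounded operator
`T` acting by `(Tξ)(h) = Σ_w α_w ξ(w⁻¹h)`) satisfies
`‖Σ_w α_w λ(w)‖ ≤ (d+1) (Σ_w |α_w|²)^{1/2}`. -/
theorem haagerup_inequality (n d : ℕ) (α : FreeGroup (Fin n) →₀ ℂ)
    (hsupp : ∀ w ∈ α.support, FreeGroup.norm w = d)
    (T : lp (fun _ : FreeGroup (Fin n) => ℂ) 2 →L[ℂ] lp (fun _ : FreeGroup (Fin n) => ℂ) 2)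
    (hT : ∀ (ξ : lp (fun _ : FreeGroup (Fin n) => ℂ) 2) (h : FreeGroup (Fin n)),
      (T ξ : ∀ _ : FreeGroup (Fin n), ℂ) h =
        ∑ w ∈ α.support, α w * (ξ : ∀ _ : FreeGroup (Fin n), ℂ) (w⁻¹ * h)) :
    ‖T‖ ≤ (d + 1 : ℝ) * Real.sqrt (∑ w ∈ α.support, ‖α w‖ ^ 2) := by
  classical
  have ha2nn : (0 : ℝ) ≤ ∑ w ∈ α.support, ‖α w‖ ^ 2 :=
    Finset.sum_nonneg fun _ _ => sq_nonneg _
  have h2 : (0 : ℝ) < (2 : ℝ≥0∞).toReal := by norm_num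
  have hpow : ∀ y : ℝ, y ^ ((2 : ℝ≥0∞).toReal) = y ^ 2 := fun y => by
    rw [show ((2 : ℝ≥0∞).toReal) = ((2 : ℕ) : ℝ) by norm_num, Real.rpow_natCast]
  refine T.opNorm_le_bound (by positivity) fun ξ => ?_
  have hξ : ∀ s : Finset (FreeGroup (Fin n)),
      ∑ h ∈ s, ‖(ξ : ∀ _ : FreeGroup (Fin n), ℂ) h‖ ^ 2 ≤ ‖ξ‖ ^ 2 := by
    intro s
    have := lp.sum_rpow_le_norm_rpow h2 ξ s
    simpa only [hpow] using this
  have hb : ∀ s : Finset (FreeGroup (Fin n)),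
      ∑ x ∈ s, ‖(T ξ : ∀ _ : FreeGroup (Fin n), ℂ) x‖ ^ 2
        ≤ ((d : ℝ) + 1) ^ 2 * (∑ w ∈ α.support, ‖α w‖ ^ 2) * ‖ξ‖ ^ 2 := by
    intro s
    have hme := Haagerup.main_est (c := α) (d := d) hsupp
      (fun h => (ξ : ∀ _ : FreeGroup (Fin n), ℂ) h) ‖ξ‖ hξ s
    refine le_trans (le_of_eq ?_) hme
    exact Finset.sum_congr rfl fun x _ => by rw [hT ξ x]
  have h1 : HasSum (fun x => ‖(T ξ : ∀ _ : FreeGroup (Fin n), ℂ) x‖ ^ 2)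
      (‖T ξ‖ ^ 2) := by
    have := lp.hasSum_norm h2 (T ξ)
    simpa only [hpow] using this
  have hB : ‖T ξ‖ ^ 2 ≤ ((d : ℝ) + 1) ^ 2 * (∑ w ∈ α.support, ‖α w‖ ^ 2) * ‖ξ‖ ^ 2 :=
    hasSum_le_of_sum_le h1 hb
  have hrhs : (0 : ℝ) ≤ ((d : ℝ) + 1) * Real.sqrt (∑ w ∈ α.support, ‖α w‖ ^ 2) * ‖ξ‖ := by
    positivity
  have := Real.sqrt_le_sqrt hB
  rw [Real.sqrt_sq (norm_nonneg _),
    show ((d : ℝ) + 1) ^ 2 * (∑ w ∈ α.support, ‖α w‖ ^ 2) * ‖ξ‖ ^ 2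
      = (((d : ℝ) + 1) * Real.sqrt (∑ w ∈ α.support, ‖α w‖ ^ 2) * ‖ξ‖) ^ 2 by
        rw [mul_pow, mul_pow, Real.sq_sqrt ha2nn],
    Real.sqrt_sq hrhs] at this
  exact this
end

section
/- The Riesz projection is unbounded in the supremum norm: for every constant C > 0 there exists a trigonometric polynomial f(θ) = Σ_{|k| ≤ N} c_k e^{ikθ} such that ‖Σ_{k > 0} c_k e^{ikθ}‖_∞ > C ‖f‖_∞, where ‖·‖_∞ denotes the supremum norm over θ ∈ [0, 2π]. -/
/-!
For `0 ≤ r < 1` let `P_N(z) = ∑_{j=1}^N z^j / j`, the Taylor polynomial of `log (1 - z)⁻¹`.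
The trigonometric polynomial with coefficients `r^|k| / k` (`0 < |k| ≤ N`) is
`2i · Im P_N(r e^{iθ})`. Since `Im log (1 - z)⁻¹` is an argument, it lies in `[-π, π]`, so once
`N` is large this polynomial is bounded by `2(π + 1)` for all `θ`. Its analytic part at `θ = 0`
is `P_N(r) ≈ log (1 - r)⁻¹`, which is as large as we like for `r` close to `1`.
-/

open Complex ComplexConjugate Finset
open scoped Real

noncomputable section

def trigPoly (θ : ℝ) : (ℤ →₀ ℂ) →ₗ[ℂ] ℂ :=
  Finsupp.linearCombination ℂ fun k : ℤ => exp (I * k * θ)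

lemma trigPoly_apply (θ : ℝ) (c : ℤ →₀ ℂ) :
    trigPoly θ c = ∑ k ∈ c.support, c k * exp (I * k * θ) := by
  simp [trigPoly, Finsupp.linearCombination_apply, Finsupp.sum]

lemma trigPoly_filter (p : ℤ → Prop) [DecidablePred p] (θ : ℝ) (c : ℤ →₀ ℂ) :
    trigPoly θ (c.filter p) = ∑ k ∈ c.support.filter p, c k * exp (I * k * θ) := by
  rw [trigPoly_apply, Finsupp.support_filter]
  exact sum_congr rfl fun k hk => by rw [Finsupp.filter_apply_pos _ _ (mem_filter.1 hk).2]

lemma norm_exp_I_mul (k : ℤ) (θ : ℝ) : ‖exp (I * k * θ)‖ = 1 := by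
  simpa [mul_comm, mul_left_comm] using norm_exp_ofReal_mul_I (k * θ)

lemma norm_trigPoly_le (θ : ℝ) (c : ℤ →₀ ℂ) : ‖trigPoly θ c‖ ≤ ∑ k ∈ c.support, ‖c k‖ := by
  rw [trigPoly_apply]
  refine (norm_sum_le _ _).trans (sum_le_sum fun k _ => ?_)
  rw [norm_mul, norm_exp_I_mul, mul_one]

def logPartialSum (N : ℕ) (z : ℂ) : ℂ := ∑ j ∈ range N, z ^ (j + 1) / (j + 1)

lemma logTaylor_neg (N : ℕ) (z : ℂ) : logTaylor (N + 1) (-z) = -logPartialSum N z := by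
  rw [logTaylor, sum_range_succ', logPartialSum, ← sum_neg_distrib]
  simp only [CharP.cast_eq_zero, div_zero, add_zero, Nat.cast_add, Nat.cast_one]
  refine sum_congr rfl fun j _ => ?_
  rw [neg_pow z, ← mul_assoc, ← pow_add, show j + 1 + 1 + (j + 1) = 2 * (j + 1) + 1 by ring,
    pow_succ, pow_mul]
  simp [neg_div]

lemma norm_logPartialSum_sub_log_le (N : ℕ) {z : ℂ} (hz : ‖z‖ < 1) :
    ‖logPartialSum N z - log (1 - z)⁻¹‖ ≤ ‖z‖ ^ (N + 1) * (1 - ‖z‖)⁻¹ / (N + 1) := by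
  rw [← norm_neg, neg_sub', sub_neg_eq_add, ← logTaylor_neg, add_comm]
  exact norm_log_one_sub_inv_add_logTaylor_neg_le N hz

def logCoeffs (r : ℝ) (N : ℕ) : ℤ →₀ ℂ :=
  ∑ j ∈ range N, ((r : ℂ) ^ (j + 1) / (j + 1)) •
    (Finsupp.single ((j : ℤ) + 1) 1 - Finsupp.single (-((j : ℤ) + 1)) 1)

lemma trigPoly_logCoeffs (r θ : ℝ) (N : ℕ) :
    trigPoly θ (logCoeffs r N) = (2 * (logPartialSum N (r * exp (θ * I))).im : ℝ) * I := by
  have hconj : conj (exp (θ * I)) = exp (-θ * I) := by rw [← exp_conj]; simp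
  rw [← sub_conj, logPartialSum, map_sum, ← sum_sub_distrib, logCoeffs, map_sum]
  refine sum_congr rfl fun j _ => ?_
  simp only [map_smul, map_sub, trigPoly, Finsupp.linearCombination_single, smul_eq_mul,
    map_div₀, map_pow, map_mul, map_add, map_natCast, map_one, conj_ofReal, hconj, mul_pow]
  rw [← exp_nat_mul, ← exp_nat_mul]
  push_cast
  ring_nf

lemma trigPoly_zero_filter_pos_logCoeffs (r : ℝ) (N : ℕ) :
    trigPoly 0 ((logCoeffs r N).filter (0 < ·)) = logPartialSum N r := by
  rw [logCoeffs, Finsupp.filter_sum, map_sum, logPartialSum]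
  refine sum_congr rfl fun j _ => ?_
  rw [Finsupp.filter_smul, Finsupp.filter_sub, Finsupp.filter_single_of_pos _ (by omega),
    Finsupp.filter_single_of_neg _ (by omega)]
  simp [trigPoly]

lemma exists_pow_succ_mul_inv_div_lt {r ε : ℝ} (hr₀ : 0 ≤ r) (hr₁ : r < 1) (hε : 0 < ε) :
    ∃ N : ℕ, r ^ (N + 1) * (1 - r)⁻¹ / (N + 1) < ε := by
  have hr : 0 < 1 - r := sub_pos.2 hr₁
  obtain ⟨N, hN⟩ := exists_pow_lt_of_lt_one (mul_pos hε hr) hr₁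
  refine ⟨N, lt_of_le_of_lt ?_ ((div_lt_iff₀ hr).2 hN)⟩
  rw [div_eq_mul_inv (r ^ N)]
  refine (div_le_self (by positivity) (by linarith [N.cast_nonneg (α := ℝ)])).trans ?_
  exact mul_le_mul_of_nonneg_right (pow_le_pow_of_le_one hr₀ hr₁.le N.le_succ) (by positivity)

lemma abs_im_logPartialSum_le (N : ℕ) {z : ℂ} (hz : ‖z‖ < 1) :
    |(logPartialSum N z).im| ≤ π + ‖z‖ ^ (N + 1) * (1 - ‖z‖)⁻¹ / (N + 1) := by
  have harg : |(log (1 - z)⁻¹).im| ≤ π := by rw [log_im]; exact abs_arg_le_pi _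
  have htail := (abs_im_le_norm _).trans (norm_logPartialSum_sub_log_le N hz)
  rw [sub_im] at htail
  calc |(logPartialSum N z).im|
      ≤ |(log (1 - z)⁻¹).im| + |(logPartialSum N z).im - (log (1 - z)⁻¹).im| := by
        simpa using abs_add_le (log (1 - z)⁻¹).im ((logPartialSum N z).im - (log (1 - z)⁻¹).im)
    _ ≤ _ := add_le_add harg htail

lemma log_inv_one_sub_le_norm_logPartialSum (N : ℕ) {r : ℝ} (hr₀ : 0 ≤ r) (hr₁ : r < 1) :
    Real.log (1 - r)⁻¹ - r ^ (N + 1) * (1 - r)⁻¹ / (N + 1) ≤ ‖logPartialSum N r‖ := by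
  have hnorm : ‖(r : ℂ)‖ = r := by simp [abs_of_nonneg hr₀]
  have htail := norm_logPartialSum_sub_log_le N (z := r) (by rwa [hnorm])
  have hlog : Real.log (1 - r)⁻¹ = (log (1 - (r : ℂ))⁻¹).re := by
    rw [log_re, norm_inv, ← ofReal_one, ← ofReal_sub, norm_real, Real.norm_of_nonneg (by linarith)]
  rw [hnorm] at htail
  rw [hlog]
  have := norm_sub_norm_le (log (1 - (r : ℂ))⁻¹) (log (1 - (r : ℂ))⁻¹ - logPartialSum N r)
  rw [sub_sub_cancel, norm_sub_rev] at this
  linarith [re_le_norm (log (1 - (r : ℂ))⁻¹)]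

lemma norm_trigPoly_logCoeffs_le (N : ℕ) {r : ℝ} (hr₀ : 0 ≤ r) (hr₁ : r < 1) (θ : ℝ) :
    ‖trigPoly θ (logCoeffs r N)‖ ≤ 2 * (π + r ^ (N + 1) * (1 - r)⁻¹ / (N + 1)) := by
  have hz : ‖(r : ℂ) * exp (θ * I)‖ = r := by
    rw [norm_mul, norm_exp_ofReal_mul_I, norm_real, Real.norm_of_nonneg hr₀, mul_one]
  have him := abs_im_logPartialSum_le N (hz ▸ hr₁)
  rw [hz] at him
  rw [trigPoly_logCoeffs, norm_mul, norm_I, mul_one, norm_real, Real.norm_eq_abs, abs_mul, abs_two]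
  linarith

lemma bddAbove_range_norm_trigPoly (s : Set ℝ) (c : ℤ →₀ ℂ) :
    BddAbove (Set.range fun θ : s => ‖trigPoly θ c‖) :=
  ⟨_, Set.forall_mem_range.2 fun θ => norm_trigPoly_le θ c⟩

end

/-- **The Riesz (analytic) projection is unbounded in the sup norm.**
For every `C > 0` there is a trigonometric polynomial `f(θ) = Σ_{k} c_k e^{ikθ}`
(with finitely many nonzero coefficients) such that
`‖Σ_{k>0} c_k e^{ikθ}‖_∞ > C ‖f‖_∞`, the sup norm taken over `θ ∈ [0, 2π]`. -/
theorem riesz_projection_unbounded :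
    ∀ C : ℝ, 0 < C → ∃ c : ℤ →₀ ℂ,
      C * (⨆ θ : Set.Icc (0 : ℝ) (2 * Real.pi),
          ‖∑ k ∈ c.support, c k * Complex.exp (Complex.I * (k : ℂ) * ((θ : ℝ) : ℂ))‖)
        < ⨆ θ : Set.Icc (0 : ℝ) (2 * Real.pi),
          ‖∑ k ∈ c.support.filter (fun k => 0 < k),
              c k * Complex.exp (Complex.I * (k : ℂ) * ((θ : ℝ) : ℂ))‖ := by
  intro C hC
  set M := 2 * C * (π + 1) + 2
  obtain ⟨r, hr₀, hr₁, hlog⟩ : ∃ r : ℝ, 0 ≤ r ∧ r < 1 ∧ Real.log (1 - r)⁻¹ = M :=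
    ⟨1 - Real.exp (-M), sub_nonneg.2 (Real.exp_le_one_iff.2 (by nlinarith [Real.pi_pos])),
      sub_lt_self _ (Real.exp_pos _), by rw [sub_sub_cancel, ← Real.exp_neg, neg_neg, Real.log_exp]⟩
  obtain ⟨N, htail⟩ := exists_pow_succ_mul_inv_div_lt hr₀ hr₁ one_pos
  refine ⟨logCoeffs r N, ?_⟩
  simp_rw [← trigPoly_apply, ← trigPoly_filter]
  have h0 : (0 : ℝ) ∈ Set.Icc 0 (2 * π) := ⟨le_rfl, by positivity⟩
  have : Nonempty (Set.Icc 0 (2 * π)) := ⟨⟨0, h0⟩⟩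
  calc C * ⨆ θ : Set.Icc 0 (2 * π), ‖trigPoly θ (logCoeffs r N)‖
      ≤ C * (2 * (π + 1)) := by
        gcongr
        exact ciSup_le fun θ => (norm_trigPoly_logCoeffs_le N hr₀ hr₁ θ).trans (by linarith)
    _ < M - 1 := by linarith
    _ ≤ ‖trigPoly 0 ((logCoeffs r N).filter (0 < ·))‖ := by
        rw [trigPoly_zero_filter_pos_logCoeffs]
        linarith [log_inv_one_sub_le_norm_logPartialSum N hr₀ hr₁]
    _ ≤ _ := le_ciSup_of_le (bddAbove_range_norm_trigPoly _ _) ⟨0, h0⟩ le_rfl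
end

section
/- Let T_n : M_n(ℂ) → M_n(ℂ) be the triangular projection, (a_{ij}) ↦ (a_{ij} 1_{i ≤ j}). Then there is an absolute constant c > 0 such that the norm of T_n as an operator on (M_n(ℂ), operator norm) is at least c · log n for all n ≥ 2. -/
/-!
Let `N = 2n`. The matrix `a` with entries `a_{jk} = N⁻¹ ∑_{t<N} φ(t) ζ^{t(k-j)}`, `ζ = e^{2πi/N}`,
`φ(t) = i(2πt/N - π)`, is the compression to `ℂⁿ` of the Fourier multiplier on `ℂᴺ` with the
sawtooth symbol `φ`, so `‖a‖ ≤ sup |φ| = π`. Summing the sawtooth against `ζ^{tm}` gives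
`a_{jk} = (π/N)(cot(π(k-j)/N) - i)` for `0 < k - j < N`, whose real part is at least
`1/(k-j) - 2/n`. Testing the upper triangular part of `a` against the all-ones vector therefore
gives `n ‖T_n a‖ ≥ ∑_{j<n} (log (n-j) - 2) = log n! - 2n ≥ n (log n - 3)`. For small `n` the
identity matrix already gives the bound.
-/

open Complex Matrix Finset
open scoped Matrix.Norms.L2Operator Real Nat

namespace Matrix

section L2OpNorm

variable {𝕜 ι κ : Type*} [RCLike 𝕜] [Fintype ι] [Fintype κ] [DecidableEq ι] [DecidableEq κ]

lemma l2_opNorm_smul_conjTranspose_mul_diagonal_mul_le {A : Matrix ι κ 𝕜} {c : ℕ}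
    (hA : Aᴴ * A = (c : 𝕜) • 1) (v : ι → 𝕜) :
    ‖(c : 𝕜)⁻¹ • (Aᴴ * diagonal v * A)‖ ≤ ‖v‖ := by
  have hAA : ‖A‖ * ‖A‖ ≤ c := by
    rw [← l2_opNorm_conjTranspose_mul_self, hA, smul_one_eq_diagonal, l2_opNorm_diagonal]
    exact (pi_norm_le_iff_of_nonneg (Nat.cast_nonneg c)).mpr fun _ => by simp
  calc ‖(c : 𝕜)⁻¹ • (Aᴴ * diagonal v * A)‖
      ≤ (c : ℝ)⁻¹ * (‖Aᴴ‖ * ‖diagonal v‖ * ‖A‖) := by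
        grw [norm_smul, l2_opNorm_mul, l2_opNorm_mul]
        simp
    _ = (c : ℝ)⁻¹ * (‖A‖ * ‖A‖) * ‖v‖ := by
        rw [l2_opNorm_conjTranspose, l2_opNorm_diagonal]; ring
    _ ≤ ‖v‖ := by
        rcases Nat.eq_zero_or_pos c with rfl | hc
        · simp
        · grw [hAA, inv_mul_cancel₀ (by positivity), one_mul]

lemma re_sum_apply_le_card_mul_l2_opNorm (B : Matrix ι ι 𝕜) :
    RCLike.re (∑ i, ∑ j, B i j) ≤ Fintype.card ι * ‖B‖ := by
  set e : EuclideanSpace 𝕜 ι := WithLp.toLp 2 fun _ => 1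
  have he : ‖e‖ ^ 2 = Fintype.card ι := by simp [e, EuclideanSpace.norm_sq_eq]
  have hinner : ∑ i, ∑ j, B i j = inner 𝕜 e (toEuclideanCLM (𝕜 := 𝕜) B e) := by
    simp [e, PiLp.inner_apply, mulVec, dotProduct]
  calc RCLike.re (∑ i, ∑ j, B i j) ≤ ‖e‖ * ‖toEuclideanCLM (𝕜 := 𝕜) B e‖ := by
        rw [hinner]; exact (RCLike.re_le_norm _).trans (norm_inner_le_norm _ _)
    _ ≤ ‖e‖ * (‖B‖ * ‖e‖) := by grw [(toEuclideanCLM (𝕜 := 𝕜) B).le_opNorm e]; rfl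
    _ = Fintype.card ι * ‖B‖ := by rw [← he]; ring

end L2OpNorm

def triangularPart {ι R : Type*} [LinearOrder ι] [Zero R] (a : Matrix ι ι R) : Matrix ι ι R :=
  of fun i j => if i ≤ j then a i j else 0

lemma triangularPart_one {ι R : Type*} [LinearOrder ι] [Zero R] [One R] :
    triangularPart (1 : Matrix ι ι R) = 1 := by
  ext i j
  rcases lt_or_ge j i with hji | hij
  · simp [triangularPart, hji.not_ge, one_apply_ne hji.ne']
  · simp [triangularPart, hij]

end Matrix

lemma Real.one_div_sub_le_cot {x : ℝ} (hx0 : 0 < x) (hx : x ≤ π / 2) :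
    1 / x - x / 2 ≤ Real.cot x := by
  rw [Real.cot_eq_cos_div_sin]
  have hsin : 0 < Real.sin x := Real.sin_pos_of_pos_of_lt_pi hx0 (by linarith [Real.pi_pos])
  have hcos : 0 ≤ Real.cos x := Real.cos_nonneg_of_mem_Icc ⟨by linarith, hx⟩
  rcases le_or_gt (x ^ 2) 2 with hx2 | hx2
  · calc 1 / x - x / 2 = (1 - x ^ 2 / 2) / x := by field_simp
      _ ≤ (1 - x ^ 2 / 2) / Real.sin x := by
          gcongr
          · linarith
          · exact Real.sin_le hx0.le
      _ ≤ Real.cos x / Real.sin x := by gcongr; exact Real.one_sub_sq_div_two_le_cos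
  · calc 1 / x - x / 2 = (2 - x ^ 2) / (2 * x) := by field_simp
      _ ≤ 0 := div_nonpos_of_nonpos_of_nonneg (by linarith) (by positivity)
      _ ≤ Real.cos x / Real.sin x := by positivity

lemma sum_range_log_add_one (n : ℕ) : ∑ j ∈ range n, Real.log (j + 1) = Real.log n ! := by
  induction n with
  | zero => simp
  | succ n ih =>
    rw [sum_range_succ, ih, Nat.factorial_succ, Nat.cast_mul,
      Real.log_mul (by positivity) (by positivity), add_comm]
    push_cast; ring

lemma sum_range_pow_eq_zero_of_pow_eq_one {w : ℂ} {N : ℕ} (hw : w ^ N = 1) (hw1 : w ≠ 1) :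
    ∑ t ∈ range N, w ^ t = 0 := by
  rw [geom_sum_eq hw1, hw, sub_self, zero_div]

lemma sub_one_mul_sum_range_natCast_mul_pow {R : Type*} [CommRing R] (w : R) (K : ℕ) :
    (w - 1) * ∑ t ∈ range K, (t : R) * w ^ t = (K - 1) * w ^ K - ∑ t ∈ range K, w ^ t + 1 := by
  induction K with
  | zero => simp
  | succ K ih =>
    rw [sum_range_succ, sum_range_succ (fun t => w ^ t), mul_add, ih]
    push_cast
    ring

lemma sum_range_natCast_mul_pow_of_pow_eq_one {w : ℂ} {N : ℕ} (hw : w ^ N = 1) (hw1 : w ≠ 1) :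
    ∑ t ∈ range N, (t : ℂ) * w ^ t = N / (w - 1) := by
  rw [eq_div_iff (sub_ne_zero.mpr hw1), mul_comm, sub_one_mul_sum_range_natCast_mul_pow,
    sum_range_pow_eq_zero_of_pow_eq_one hw hw1, hw]
  ring

lemma Complex.star_mul_self_of_norm_eq_one {z : ℂ} (hz : ‖z‖ = 1) : star z * z = 1 := by
  rw [Complex.star_def, Complex.conj_mul', hz]; norm_num

lemma Complex.star_pow_mul_pow_of_le {z : ℂ} (hz : ‖z‖ = 1) {j k : ℕ} (hjk : j ≤ k) :
    star (z ^ j) * z ^ k = z ^ (k - j) := by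
  rw [← Nat.sub_add_cancel hjk, pow_add, Nat.add_sub_cancel, mul_left_comm,
    star_mul_self_of_norm_eq_one (by rw [norm_pow, hz, one_pow]), mul_one]

noncomputable def unitRoot (N : ℕ) : ℂ := exp (2 * π * I / N)

lemma norm_unitRoot (N : ℕ) : ‖unitRoot N‖ = 1 := by
  simp [unitRoot, Complex.norm_exp]

lemma isPrimitiveRoot_unitRoot {N : ℕ} (hN : N ≠ 0) : IsPrimitiveRoot (unitRoot N) N :=
  isPrimitiveRoot_exp N hN

lemma unitRoot_pow (N m : ℕ) : unitRoot N ^ m = exp (2 * π * I * (m / N)) := by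
  rw [unitRoot, ← Complex.exp_nat_mul]; ring_nf

noncomputable def fourierMatrix (N n : ℕ) : Matrix (Fin N) (Fin n) ℂ :=
  of fun t k => (unitRoot N ^ (k : ℕ)) ^ (t : ℕ)

lemma conjTranspose_fourierMatrix_mul_self_apply (N n : ℕ) (j k : Fin n) :
    ((fourierMatrix N n)ᴴ * fourierMatrix N n) j k
      = ∑ t ∈ range N, (star (unitRoot N ^ (j : ℕ)) * unitRoot N ^ (k : ℕ)) ^ t := by
  rw [← Fin.sum_univ_eq_sum_range, mul_apply]
  refine sum_congr rfl fun t _ => ?_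
  rw [conjTranspose_apply, fourierMatrix, of_apply, of_apply, star_pow, mul_pow]

lemma conjTranspose_fourierMatrix_mul_self {N n : ℕ} (hnN : n ≤ N) :
    (fourierMatrix N n)ᴴ * fourierMatrix N n = (N : ℂ) • 1 := by
  ext j k
  have hζ := isPrimitiveRoot_unitRoot (N := N) (by have := j.2; omega)
  have hnorm (i : ℕ) : ‖unitRoot N ^ i‖ = 1 := by rw [norm_pow, norm_unitRoot, one_pow]
  rw [conjTranspose_fourierMatrix_mul_self_apply, Matrix.smul_apply, one_apply]
  split_ifs with hjk
  · subst hjk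
    simp only [star_mul_self_of_norm_eq_one (hnorm _), one_pow, sum_const, card_range,
      nsmul_eq_mul, smul_eq_mul, mul_one]
  · rw [smul_zero]
    apply sum_range_pow_eq_zero_of_pow_eq_one
    · rw [mul_pow, ← star_pow, pow_right_comm, pow_right_comm _ (k : ℕ), hζ.pow_eq_one, one_pow,
        one_pow, star_one, one_mul]
    · intro h
      have hkj : unitRoot N ^ (k : ℕ) = unitRoot N ^ (j : ℕ) := by
        calc unitRoot N ^ (k : ℕ)
            = unitRoot N ^ (j : ℕ) * star (unitRoot N ^ (j : ℕ)) * unitRoot N ^ (k : ℕ) := by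
              rw [mul_comm _ (star _), star_mul_self_of_norm_eq_one (hnorm j), one_mul]
          _ = unitRoot N ^ (j : ℕ) := by rw [mul_assoc, h, mul_one]
      exact hjk (Fin.ext (hζ.pow_inj (j.2.trans_le hnN) (k.2.trans_le hnN) hkj.symm))

noncomputable def sawtooth (N t : ℕ) : ℂ := I * ((π * (2 * t - N) / N : ℝ) : ℂ)

lemma norm_sawtooth_le {N t : ℕ} (ht : t ≤ N) : ‖sawtooth N t‖ ≤ π := by
  rw [sawtooth, norm_mul, norm_I, one_mul, norm_real, Real.norm_eq_abs, abs_le]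
  rcases Nat.eq_zero_or_pos N with rfl | hN
  · simp [Real.pi_pos.le]
  have ht' : (t : ℝ) ≤ N := by exact_mod_cast ht
  constructor
  · rw [le_div_iff₀ (by positivity)]; nlinarith [Real.pi_pos]
  · rw [div_le_iff₀ (by positivity)]; nlinarith [Real.pi_pos]

noncomputable def sawtoothCoeff (N : ℕ) (w : ℂ) : ℂ :=
  (N : ℂ)⁻¹ * ∑ t ∈ range N, sawtooth N t * w ^ t

lemma re_sawtoothCoeff_one (N : ℕ) : (sawtoothCoeff N 1).re = 0 := by
  simp [sawtoothCoeff, sawtooth, Complex.mul_re, ← Complex.ofReal_natCast, ← Complex.ofReal_inv]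

lemma sawtoothCoeff_of_pow_eq_one {w : ℂ} {N : ℕ} (hw : w ^ N = 1) (hw1 : w ≠ 1) :
    sawtoothCoeff N w = 2 * π * I / (N * (w - 1)) := by
  rcases Nat.eq_zero_or_pos N with rfl | hN
  · simp [sawtoothCoeff]
  have hN' : (N : ℂ) ≠ 0 := by exact_mod_cast hN.ne'
  have hterm (t : ℕ) : sawtooth N t * w ^ t = 2 * π * I / N * (t * w ^ t) - π * I * w ^ t := by
    rw [sawtooth]; push_cast; field_simp
  simp only [sawtoothCoeff, hterm, sum_sub_distrib, ← mul_sum,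
    sum_range_natCast_mul_pow_of_pow_eq_one hw hw1, sum_range_pow_eq_zero_of_pow_eq_one hw hw1]
  field_simp [sub_ne_zero.mpr hw1]
  ring

lemma sawtoothCoeff_unitRoot_pow {N m : ℕ} (hm : unitRoot N ^ m ≠ 1) :
    sawtoothCoeff N (unitRoot N ^ m)
      = ((π / N * Real.cot (π * m / N) : ℝ) : ℂ) - ((π / N : ℝ) : ℂ) * I := by
  have hN : N ≠ 0 := by rintro rfl; simp [unitRoot] at hm
  have hpow : (unitRoot N ^ m) ^ N = 1 := by
    rw [pow_right_comm, (isPrimitiveRoot_unitRoot hN).pow_eq_one, one_pow]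
  have hcot := Complex.cot_pi_eq_exp_ratio (m / N)
  rw [← unitRoot_pow] at hcot
  have h1 : unitRoot N ^ m - 1 ≠ 0 := sub_ne_zero.mpr hm
  rw [sawtoothCoeff_of_pow_eq_one hpow hm]
  push_cast
  rw [show (π : ℂ) * m / N = π * (m / N) by ring, hcot]
  field_simp
  ring_nf
  rw [I_sq]
  ring

lemma inv_sub_two_div_le_re_sawtoothCoeff {n m : ℕ} (hm0 : 0 < m) (hmn : m < n) :
    (m : ℝ)⁻¹ - 2 / n ≤ (sawtoothCoeff (2 * n) (unitRoot (2 * n) ^ m)).re := by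
  have hζ := isPrimitiveRoot_unitRoot (N := 2 * n) (by omega)
  rw [sawtoothCoeff_unitRoot_pow (hζ.pow_ne_one_of_pos_of_lt hm0.ne' (by omega)),
    sub_re, re_ofReal_mul, I_re, mul_zero, sub_zero, ofReal_re]
  have hn : (0 : ℝ) < n := by exact_mod_cast hm0.trans hmn
  have hmn' : (m : ℝ) < n := by exact_mod_cast hmn
  have hx : π * m / (2 * n : ℕ) ≤ π / 2 := by
    push_cast; rw [div_le_div_iff₀ (by positivity) two_pos]; nlinarith [Real.pi_pos]
  have hcot := Real.one_div_sub_le_cot (div_pos (by positivity) (by push_cast; positivity)) hx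
  have hπ : π ^ 2 < 16 := by nlinarith [Real.pi_lt_four, Real.pi_pos]
  calc (m : ℝ)⁻¹ - 2 / n
      ≤ π / (2 * n : ℕ) * (1 / (π * m / (2 * n : ℕ)) - π * m / (2 * n : ℕ) / 2) := by
        push_cast
        field_simp
        nlinarith
    _ ≤ _ := by gcongr

lemma log_sub_two_le_sum_re_sawtoothCoeff {n M : ℕ} (hM : M ≤ n) :
    Real.log M - 2 ≤ ∑ m ∈ range M, (sawtoothCoeff (2 * n) (unitRoot (2 * n) ^ m)).re := by
  rcases M with _ | K
  · simp
  rw [sum_range_succ', pow_zero, re_sawtoothCoeff_one, add_zero]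
  have hharm : Real.log (K + 1 : ℕ) ≤ ∑ m ∈ range K, ((m : ℝ) + 1)⁻¹ := by
    simpa [harmonic] using log_add_one_le_harmonic K
  have hterms : ∑ m ∈ range K, (((m + 1 : ℕ) : ℝ)⁻¹ - 2 / n)
      ≤ ∑ m ∈ range K, (sawtoothCoeff (2 * n) (unitRoot (2 * n) ^ (m + 1))).re :=
    sum_le_sum fun m hm => inv_sub_two_div_le_re_sawtoothCoeff m.succ_pos (by simp at hm; omega)
  have hcount : ∑ _m ∈ range K, (2 / n : ℝ) ≤ 2 := by
    rw [sum_const, card_range, nsmul_eq_mul]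
    rcases Nat.eq_zero_or_pos n with rfl | hn
    · simp
    rw [mul_div_assoc', div_le_iff₀ (by positivity)]
    have : (K : ℝ) ≤ n := by exact_mod_cast (by omega : K ≤ n)
    linarith
  rw [sum_sub_distrib] at hterms
  push_cast at hterms hharm ⊢
  linarith

noncomputable def sawtoothToeplitz (N n : ℕ) : Matrix (Fin n) (Fin n) ℂ :=
  (N : ℂ)⁻¹ • ((fourierMatrix N n)ᴴ * diagonal (fun t : Fin N => sawtooth N t) * fourierMatrix N n)

lemma l2_opNorm_sawtoothToeplitz_le {N n : ℕ} (hnN : n ≤ N) : ‖sawtoothToeplitz N n‖ ≤ π :=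
  (l2_opNorm_smul_conjTranspose_mul_diagonal_mul_le
    (conjTranspose_fourierMatrix_mul_self hnN) _).trans
    ((pi_norm_le_iff_of_nonneg Real.pi_pos.le).mpr fun t => norm_sawtooth_le t.2.le)

lemma sawtoothToeplitz_apply_of_le {N n : ℕ} {j k : Fin n} (hjk : j ≤ k) :
    sawtoothToeplitz N n j k = sawtoothCoeff N (unitRoot N ^ ((k : ℕ) - j)) := by
  rw [sawtoothToeplitz, Matrix.smul_apply, smul_eq_mul, sawtoothCoeff, mul_apply,
    ← Fin.sum_univ_eq_sum_range]
  congr 1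
  refine sum_congr rfl fun t _ => ?_
  rw [mul_diagonal, conjTranspose_apply, fourierMatrix, of_apply, of_apply,
    ← star_pow_mul_pow_of_le (norm_unitRoot N) hjk, mul_pow, star_pow]
  ring

lemma sum_triangularPart_sawtoothToeplitz_row (N n : ℕ) (j : Fin n) :
    ∑ k, triangularPart (sawtoothToeplitz N n) j k
      = ∑ m ∈ range (n - j), sawtoothCoeff N (unitRoot N ^ m) := by
  calc ∑ k, triangularPart (sawtoothToeplitz N n) j k
      = ∑ k : Fin n, if (j : ℕ) ≤ k then sawtoothCoeff N (unitRoot N ^ ((k : ℕ) - j)) else 0 := by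
        refine sum_congr rfl fun k _ => ?_
        by_cases hjk : j ≤ k
        · rw [triangularPart, of_apply, if_pos hjk, if_pos (show (j : ℕ) ≤ k from hjk),
            sawtoothToeplitz_apply_of_le hjk]
        · rw [triangularPart, of_apply, if_neg hjk, if_neg (show ¬(j : ℕ) ≤ k from hjk)]
    _ = ∑ k ∈ range n, if (j : ℕ) ≤ k then sawtoothCoeff N (unitRoot N ^ (k - j)) else 0 :=
        Fin.sum_univ_eq_sum_range
          (fun k => if (j : ℕ) ≤ k then sawtoothCoeff N (unitRoot N ^ (k - j)) else 0) n
    _ = ∑ m ∈ range (n - j), sawtoothCoeff N (unitRoot N ^ m) := by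
        rw [← sum_range_add_sum_Ico _ j.2.le, sum_Ico_eq_sum_range,
          sum_eq_zero fun k hk => if_neg (by simpa using hk), zero_add]
        refine sum_congr rfl fun m _ => ?_
        rw [if_pos (Nat.le_add_right _ _), Nat.add_sub_cancel_left]

lemma mul_log_sub_three_le_re_sum_triangularPart_sawtoothToeplitz {n : ℕ} (hn : n ≠ 0) :
    n * (Real.log n - 3) ≤ (∑ j, ∑ k, triangularPart (sawtoothToeplitz (2 * n) n) j k).re := by
  have hrows (j : Fin n) : Real.log (n - j : ℕ) - 2
      ≤ (∑ k, triangularPart (sawtoothToeplitz (2 * n) n) j k).re := by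
    rw [sum_triangularPart_sawtoothToeplitz_row, re_sum]
    exact log_sub_two_le_sum_re_sawtoothCoeff (Nat.sub_le _ _)
  have hlogs : ∑ j : Fin n, Real.log (n - j : ℕ) = Real.log n ! := by
    rw [Fin.sum_univ_eq_sum_range (fun j => Real.log (n - j : ℕ)), ← sum_range_reflect,
      ← sum_range_log_add_one]
    refine sum_congr rfl fun j hj => ?_
    rw [mem_range] at hj
    rw [show n - (n - 1 - j) = j + 1 by omega, Nat.cast_succ]
  have hstirling := Stirling.le_log_factorial_stirling hn
  have hlog2π : 0 < Real.log (2 * π) := Real.log_pos (by linarith [Real.pi_gt_three])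
  have hlogn : 0 ≤ Real.log n := Real.log_natCast_nonneg n
  calc (n : ℝ) * (Real.log n - 3) ≤ ∑ j : Fin n, (Real.log (n - j : ℕ) - 2) := by
        rw [sum_sub_distrib, hlogs, sum_const, card_univ, Fintype.card_fin, nsmul_eq_mul]
        nlinarith
    _ ≤ _ := by rw [re_sum]; exact sum_le_sum fun j _ => hrows j

lemma log_sub_three_le_l2_opNorm_triangularPart_sawtoothToeplitz {n : ℕ} (hn : n ≠ 0) :
    Real.log n - 3 ≤ ‖triangularPart (sawtoothToeplitz (2 * n) n)‖ := by
  have h := (mul_log_sub_three_le_re_sum_triangularPart_sawtoothToeplitz hn).trans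
    (re_sum_apply_le_card_mul_l2_opNorm (𝕜 := ℂ) _)
  rw [Fintype.card_fin] at h
  exact le_of_mul_le_mul_left h (by positivity)

/-- **Logarithmic lower bound for the triangular projection.**
Let `T_n : M_n(ℂ) → M_n(ℂ)` be the triangular projection `(a_{ij}) ↦ (a_{ij} 1_{i≤j})`.
There is an absolute constant `c > 0` such that for all `n ≥ 2` the norm of `T_n` as an
operator on `M_n(ℂ)` with the operator norm (as operators on `ℓ²ₙ`) is at least `c log n`;
equivalently, there is a matrix witnessing `‖T_n a‖ ≥ c (log n) ‖a‖`. -/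
theorem triangular_projection_lower :
    ∃ c : ℝ, 0 < c ∧ ∀ n : ℕ, 2 ≤ n →
      ∃ a : Matrix (Fin n) (Fin n) ℂ, a ≠ 0 ∧
        c * Real.log n * ‖Matrix.toEuclideanCLM (𝕜 := ℂ) a‖ ≤
          ‖Matrix.toEuclideanCLM (𝕜 := ℂ)
            (Matrix.of fun i j => if i ≤ j then a i j else 0)‖ := by
  refine ⟨1 / 8, by norm_num, fun n hn => ?_⟩
  have : Nonempty (Fin n) := ⟨⟨0, by omega⟩⟩
  rcases lt_or_ge (Real.log n) 6 with hlog | hlog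
  · refine ⟨1, one_ne_zero, ?_⟩
    change _ ≤ ‖toEuclideanCLM (n := Fin n) (𝕜 := ℂ) (triangularPart 1)‖
    rw [triangularPart_one, map_one, norm_one]
    linarith
  · have hT := log_sub_three_le_l2_opNorm_triangularPart_sawtoothToeplitz (n := n) (by omega)
    have hA := l2_opNorm_sawtoothToeplitz_le (by omega : n ≤ 2 * n)
    refine ⟨sawtoothToeplitz (2 * n) n, fun h => ?_, ?_⟩
    · have h0 : triangularPart (sawtoothToeplitz (2 * n) n) = 0 := by
        ext i j; simp [triangularPart, h]
      rw [h0, norm_zero] at hT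
      linarith
    · change _ ≤ ‖triangularPart (sawtoothToeplitz (2 * n) n)‖
      rw [l2_opNorm_toEuclideanCLM]
      nlinarith [Real.pi_lt_four]
end
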